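/- Let p be a prime, G a finite group, S a normal subgroup of G of order coprime to p, and P a p-subgroup of G such that G = S·C_G(P). Then C_G(P) controls the p-fusion in G in the following sense: for every p-subgroup Q of G with Q ≤ C_G(P), one has N_G(Q) ⊆ C_G(Q) · C_G(P). -/

import Mathlib

/-!
Write `g = s c` with `s ∈ S` and `c ∈ C := C_G(P)`. Since `g` normalizes `Q`, the conjugate
`c Q c⁻¹ = s⁻¹ Q s` lies in both `C` and `S Q`. As `S` meets every `p`-subgroup trivially, `Q` and
`c Q c⁻¹` are Sylow subgroups of `H = S Q ∩ C`, so some `h ∈ H` conjugates one onto the other and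
`n = h c ∈ C` normalizes `Q`. Then `g n⁻¹ = s h⁻¹ ∈ S Q` normalizes `Q`; writing it as `s₁ q`, the
element `s₁ ∈ S` normalizes `Q`, so its commutators with `Q` lie in `S ∩ Q = 1`. Hence
`g = s₁ · (q n)` with `s₁ ∈ C_G(Q)` and `q n ∈ C`.
-/

open Pointwise

namespace Sylow

variable {p : ℕ} {G : Type*} [Group G]

def ofMaximalLE {H Q : Subgroup G} (hQH : Q ≤ H) (hQ : IsPGroup p Q)
    (hmax : ∀ T : Subgroup G, IsPGroup p T → Q ≤ T → T ≤ H → T = Q) : Sylow p H where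
  toSubgroup := Q.subgroupOf H
  isPGroup' := hQ.comap_subtype
  is_maximal' {R} hR hQR := by
    have hQR' : Q ≤ R.map H.subtype := by
      simpa [Subgroup.subgroupOf_map_subtype, hQH] using Subgroup.map_mono (f := H.subtype) hQR
    have hRQ : R.map H.subtype = Q := hmax _ (hR.map _) hQR' (Subgroup.map_subtype_le R)
    rw [← hRQ]
    exact (Subgroup.comap_map_eq_self_of_injective H.subtype_injective R).symm

theorem exists_mem_conj_smul_eq_of_maximalLE [Finite G] [Fact p.Prime] {H Q₁ Q₂ : Subgroup G}
    (h₁ : Q₁ ≤ H) (h₂ : Q₂ ≤ H) (hQ₁ : IsPGroup p Q₁) (hQ₂ : IsPGroup p Q₂)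
    (hmax₁ : ∀ T : Subgroup G, IsPGroup p T → Q₁ ≤ T → T ≤ H → T = Q₁)
    (hmax₂ : ∀ T : Subgroup G, IsPGroup p T → Q₂ ≤ T → T ≤ H → T = Q₂) :
    ∃ h ∈ H, MulAut.conj h • Q₂ = Q₁ := by
  obtain ⟨h, hh⟩ :=
    MulAction.exists_smul_eq H (ofMaximalLE h₂ hQ₂ hmax₂) (ofMaximalLE h₁ hQ₁ hmax₁)
  have hsub : (MulAut.conj (h : G) • Q₂).subgroupOf H = Q₁.subgroupOf H := by
    rw [← Subgroup.conj_smul_subgroupOf h₂]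
    exact congrArg Sylow.toSubgroup hh
  refine ⟨h, h.2, ?_⟩
  rwa [Subgroup.subgroupOf_inj, inf_of_le_left h₁,
    inf_of_le_left (Subgroup.conj_smul_le_of_le h₂ h)] at hsub

end Sylow

namespace Subgroup

variable {G : Type*} [Group G]

theorem conj_smul_eq_self_iff_mem_normalizer {H : Subgroup G} {g : G} :
    MulAut.conj g • H = H ↔ g ∈ normalizer (H : Set G) :=
  conjAct_pointwise_smul_iff

theorem disjoint_of_coprime_card_of_isPGroup [Finite G] {p : ℕ} [Fact p.Prime]
    {S Q : Subgroup G} (hS : (Nat.card S).Coprime p) (hQ : IsPGroup p Q) : Disjoint S Q := by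
  obtain ⟨k, hk⟩ := hQ.exists_card_eq
  exact disjoint_of_coprime_natCard (hk ▸ hS.pow_right k)

variable {S : Subgroup G} [S.Normal]

-- Dedekind's modular law: `T = T ⊓ (S ⊔ W) = (T ⊓ S) ⊔ W = W`.
theorem eq_of_le_sup_of_disjoint {W T : Subgroup G} (hST : Disjoint S T) (hWT : W ≤ T)
    (hTSW : T ≤ S ⊔ W) : T = W := by
  refine le_antisymm (fun x hx => ?_) hWT
  obtain ⟨a, ha, w, hw, rfl⟩ := mem_sup_of_normal_left.mp (hTSW hx)
  have haT : a ∈ T := by simpa using mul_mem hx (inv_mem (hWT hw))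
  rwa [disjoint_def.mp hST ha haT, one_mul]

theorem mem_centralizer_of_mem_normalizer_of_disjoint {Q : Subgroup G} (hSQ : Disjoint S Q)
    {s : G} (hs : s ∈ S) (hsQ : s ∈ normalizer (Q : Set G)) : s ∈ centralizer (Q : Set G) := by
  refine mem_centralizer_iff.mpr fun x hx => ?_
  have hQ : s * x * s⁻¹ * x⁻¹ ∈ Q := mul_mem ((mem_normalizer_iff.mp hsQ x).mp hx) (inv_mem hx)
  have hS : s * x * s⁻¹ * x⁻¹ ∈ S := by
    simpa only [mul_assoc] using mul_mem hs (‹S.Normal›.conj_mem s⁻¹ (inv_mem hs) x)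
  calc x * s = (s * x * s⁻¹ * x⁻¹)⁻¹ * (s * x) := by group
    _ = s * x := by rw [disjoint_def.mp hSQ hS hQ, inv_one, one_mul]

theorem exists_mem_centralizer_mul_of_mem_normalizer_sup {Q : Subgroup G} (hSQ : Disjoint S Q)
    {x : G} (hxN : x ∈ normalizer (Q : Set G)) (hx : x ∈ S ⊔ Q) :
    ∃ a ∈ centralizer (Q : Set G), ∃ q ∈ Q, x = a * q := by
  obtain ⟨a, ha, q, hq, rfl⟩ := mem_sup_of_normal_left.mp hx
  have haN : a ∈ normalizer (Q : Set G) := by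
    simpa using mul_mem hxN (inv_mem (le_normalizer hq))
  exact ⟨a, mem_centralizer_of_mem_normalizer_of_disjoint hSQ ha haN, q, hq, rfl⟩

theorem exists_mem_normalizer_mul_inv_mem_sup [Finite G] {p : ℕ} [Fact p.Prime] {C Q : Subgroup G}
    (hS : (Nat.card S).Coprime p) (hQ : IsPGroup p Q) (hQC : Q ≤ C) {s c : G} (hs : s ∈ S)
    (hc : c ∈ C) (hsc : s * c ∈ normalizer (Q : Set G)) :
    ∃ n ∈ C, n ∈ normalizer (Q : Set G) ∧ s * c * n⁻¹ ∈ S ⊔ Q := by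
  set Q' := MulAut.conj c • Q
  have hQ'_eq : Q' = MulAut.conj s⁻¹ • Q := by
    rw [← conj_smul_eq_self_iff_mem_normalizer.mpr hsc, smul_smul, ← map_mul, inv_mul_cancel_left]
  have hsup : S ⊔ Q' = S ⊔ Q := calc
    S ⊔ Q' = MulAut.conj s⁻¹ • S ⊔ MulAut.conj s⁻¹ • Q := by rw [Normal.conj_smul_eq_self, hQ'_eq]
    _ = MulAut.conj s⁻¹ • (S ⊔ Q) := (smul_sup _ _ _).symm
    _ = S ⊔ Q := conj_smul_eq_self_of_mem (mem_sup_left (inv_mem hs))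
  have hmax (W : Subgroup G) (hW : S ⊔ W = S ⊔ Q) (T : Subgroup G) (hT : IsPGroup p T)
      (hWT : W ≤ T) (hTH : T ≤ (S ⊔ Q) ⊓ C) : T = W :=
    eq_of_le_sup_of_disjoint (disjoint_of_coprime_card_of_isPGroup hS hT) hWT
      (hW ▸ hTH.trans inf_le_left)
  obtain ⟨h, hH, hh⟩ := Sylow.exists_mem_conj_smul_eq_of_maximalLE (H := (S ⊔ Q) ⊓ C)
    (le_inf le_sup_right hQC) (le_inf (hsup ▸ le_sup_right) (conj_smul_le_of_le hQC ⟨c, hc⟩))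
    hQ (hQ.map _) (hmax Q rfl) (hmax Q' hsup)
  refine ⟨h * c, mul_mem hH.2 hc, ?_, ?_⟩
  · rw [← conj_smul_eq_self_iff_mem_normalizer, map_mul, mul_smul, hh]
  · rw [mul_inv_rev, ← mul_assoc, mul_inv_cancel_right]
    exact mul_mem (mem_sup_left hs) (inv_mem hH.1)

end Subgroup

theorem stmt_6_general (p : ℕ) (hp : p.Prime) (G : Type*) [Group G] [Finite G]
    (S : Subgroup G) (hS : S.Normal) (hScop : Nat.Coprime (Nat.card S) p)
    (P : Subgroup G)
    (hfact : ∀ g : G, ∃ s ∈ S, ∃ c ∈ Subgroup.centralizer (P : Set G), g = s * c) :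
    ∀ Q : Subgroup G, IsPGroup p Q → Q ≤ Subgroup.centralizer (P : Set G) →
      ∀ g ∈ Subgroup.normalizer (Q : Set G),
        ∃ a ∈ Subgroup.centralizer (Q : Set G),
          ∃ c ∈ Subgroup.centralizer (P : Set G), g = a * c := by
  intro Q hQ hQC g hg
  have : Fact p.Prime := ⟨hp⟩
  obtain ⟨s, hs, c, hc, rfl⟩ := hfact g
  obtain ⟨n, hnC, hnN, hsup⟩ := Subgroup.exists_mem_normalizer_mul_inv_mem_sup hScop hQ hQC hs hc hg
  obtain ⟨a, ha, q, hq, hsc⟩ := Subgroup.exists_mem_centralizer_mul_of_mem_normalizer_sup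
    (Subgroup.disjoint_of_coprime_card_of_isPGroup hScop hQ) (mul_mem hg (inv_mem hnN)) hsup
  refine ⟨a, ha, q * n, mul_mem (hQC hq) hnC, ?_⟩
  rw [← mul_assoc, ← hsc, inv_mul_cancel_right]

/-- With `S ⊴ G` of order coprime to `p` and `P` a `p`-subgroup with
`G = S·C_G(P)`, the centraliser `C_G(P)` controls `p`-fusion: for every `p`-subgroup
`Q ≤ C_G(P)` one has `N_G(Q) ⊆ C_G(Q)·C_G(P)`. -/
theorem stmt_6 (p : ℕ) (hp : p.Prime) (G : Type*) [Group G] [Finite G]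
    (S : Subgroup G) (hS : S.Normal) (hScop : Nat.Coprime (Nat.card S) p)
    (P : Subgroup G) (hP : IsPGroup p P)
    (hfact : ∀ g : G, ∃ s ∈ S, ∃ c ∈ Subgroup.centralizer (P : Set G), g = s * c) :
    ∀ Q : Subgroup G, IsPGroup p Q → Q ≤ Subgroup.centralizer (P : Set G) →
      ∀ g ∈ Subgroup.normalizer (Q : Set G),
        ∃ a ∈ Subgroup.centralizer (Q : Set G),
          ∃ c ∈ Subgroup.centralizer (P : Set G), g = a * c :=
  stmt_6_general p hp G S hS hScop P hfact
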